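/- arXiv:2207.10588 — 3 statements merged into one kernel-verified Lean document; each statement's English description precedes it below -/
import Mathlib

section
/- For every a ∈ R^w and every i ∈ {1,…,m}, the coefficient of the degree-one monomial y_i in the shifted polynomial Q_S(Y+a) equals L_i(a′); in particular it is zero if and only if a′ satisfies the i-th linear equation. Moreover, if additionally a_j = 0 for all 1 ≤ j ≤ w−n, then for every i with m < i ≤ w the coefficient of y_i in Q_S(Y+a) is zero. -/
open MvPolynomial

open scoped Classical

noncomputable section

/-- Extension of an `m × n` matrix to a function `ℕ → ℕ → R` vanishing outside its range. -/
def Aext {R : Type*} [CommRing R] (n m : ℕ) (A : Matrix (Fin m) (Fin n) R) : ℕ → ℕ → R :=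
  fun i j => if h : i < m ∧ j < n then A ⟨i, h.1⟩ ⟨j, h.2⟩ else 0

/-- The `w × w` matrix `C` of the paper (Section 5), with `w = max (2n) (2m)`:
`C_{i,j} = A_{i, j−w+n}` if `i < m` and `j ≥ w − n` (`0`-indexed), and `0` otherwise;
i.e. `A` is the top right block of `C` and the rest of `C` is zeros. -/
def Cmat {R : Type*} [CommRing R] (n m : ℕ) (A : Matrix (Fin m) (Fin n) R) :
    Matrix (Fin (max (2 * n) (2 * m))) (Fin (max (2 * n) (2 * m))) R :=
  fun i j =>
    if i.val < m ∧ max (2 * n) (2 * m) - n ≤ j.val then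
      Aext n m A i.val (j.val - (max (2 * n) (2 * m) - n))
    else 0

/-- The vector `e ∈ R^w`: `e_i = b_i` for `i < m` and `e_i = 0` otherwise. -/
def evec {R : Type*} [CommRing R] (n m : ℕ) (b : Fin m → R) :
    Fin (max (2 * n) (2 * m)) → R :=
  fun i => if h : i.val < m then b ⟨i.val, h⟩ else 0

/-- The polynomial `Q_S(y_1,…,y_w) = Σ_{i,j} C_{i,j}·y_i·y_j + Σ_i e_i·y_i + e_0`
of Section 5 of the paper. -/
def QS {R : Type*} [CommRing R] (n m : ℕ) (A : Matrix (Fin m) (Fin n) R)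
    (b : Fin m → R) (e0 : R) : MvPolynomial (Fin (max (2 * n) (2 * m))) R :=
  (∑ i, ∑ j, C (Cmat n m A i j) * X i * X j) + (∑ i, C (evec n m b i) * X i) + C e0

/-- The shift of a multivariate polynomial by a vector `a`: the image of `f` under the
`R`-algebra endomorphism sending each variable `y_i` to `y_i + a_i`. -/
def shift {R : Type*} [CommRing R] {σ : Type*} (a : σ → R) (f : MvPolynomial σ R) :
    MvPolynomial σ R :=
  aeval (fun i => X i + C (a i)) f

/-- The projection `a′ ∈ R^n` of `a ∈ R^w` to its last `n` coordinates:
`a′_j = a_{j + w − n}`. -/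
def lastn {R : Type*} (n m : ℕ) (a : Fin (max (2 * n) (2 * m)) → R) : Fin n → R :=
  fun j => a ⟨j.val + (max (2 * n) (2 * m) - n), by have := j.isLt; omega⟩

/-- The number of non-constant monomials (monomials of total degree at least `1`)
with nonzero coefficient in `f`. -/
def nonConst {R : Type*} [CommRing R] {σ : Type*} (f : MvPolynomial σ R) : ℕ :=
  (f.support.filter fun mo => mo ≠ 0).card


section Aux

variable {R : Type*} [CommRing R] {σ : Type*} [Fintype σ] [DecidableEq σ]

omit [Fintype σ] in
lemma aux_coeff_XX (k i j : σ) :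
    coeff (Finsupp.single k 1) (X i * X j : MvPolynomial σ R) = 0 := by
  rw [coeff_X_mul']
  split
  · rename_i h
    have hik : i = k := by
      by_contra hc
      simp [Finsupp.single_apply, Finsupp.mem_support_iff, Ne.symm hc] at h
      exact hc h
    subst hik
    rw [show Finsupp.single i 1 - Finsupp.single i 1 = 0 by simp, coeff_X']
    rw [if_neg ((fun h => one_ne_zero (Finsupp.single_eq_zero.1 h)))]
  · rfl

omit [Fintype σ] in
lemma aux_coeff_term (k i j : σ) (c ai aj : R) :
    coeff (Finsupp.single k 1) (C c * (X i + C ai) * (X j + C aj)) =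
      (if i = k then c * aj else 0) + (if j = k then c * ai else 0) := by
  have : C c * (X i + C ai) * (X j + C aj)
      = C c * (X i * X j) + C (c * aj) * X i + C (c * ai) * X j + C (c * (ai * aj)) := by
    simp only [map_mul]; ring
  rw [this]
  simp only [coeff_add, coeff_C_mul, aux_coeff_XX, mul_zero, coeff_X',
    coeff_C, if_neg (Ne.symm (fun h => one_ne_zero (Finsupp.single_eq_zero.1 h)))]
  by_cases h1 : i = k <;> by_cases h2 : j = k <;>
    simp [h1, h2, Finsupp.single_left_inj (one_ne_zero : (1:ℕ) ≠ 0), eq_comm]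

lemma aux_coeff_shift_gen (C' : σ → σ → R) (e' : σ → R) (e0 : R) (a : σ → R) (k : σ) :
    coeff (Finsupp.single k 1) (shift a
      ((∑ i, ∑ j, C (C' i j) * X i * X j) + (∑ i, C (e' i) * X i) + C e0)) =
      (∑ j, C' k j * a j) + (∑ i, C' i k * a i) + e' k := by
  unfold shift
  simp only [map_add, map_sum, map_mul, aeval_X, aeval_C, algebraMap_eq]
  rw [coeff_add, coeff_add, coeff_C,
    if_neg (Ne.symm (fun h => one_ne_zero (Finsupp.single_eq_zero.1 h))), add_zero,
    coeff_sum, coeff_sum]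
  have h1 : ∀ i : σ, coeff (Finsupp.single k 1) (C (e' i) * (X i + C (a i)))
      = if i = k then e' i else 0 := by
    intro i
    rw [mul_add, coeff_add, ← map_mul, coeff_C,
      if_neg (Ne.symm (fun h => one_ne_zero (Finsupp.single_eq_zero.1 h))), add_zero,
      coeff_C_mul, coeff_X']
    by_cases h : i = k <;>
      simp [h, Finsupp.single_left_inj (one_ne_zero : (1:ℕ) ≠ 0), eq_comm]
  simp only [coeff_sum, aux_coeff_term, h1, Finset.sum_add_distrib, Finset.sum_ite_eq',
    Finset.mem_univ, if_true]
  have h2 : ∀ x : σ, (∑ x1 : σ, if x = k then C' x x1 * a x1 else 0)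
      = if x = k then ∑ x1 : σ, C' x x1 * a x1 else 0 := by
    intro x; split <;> simp
  rw [Finset.sum_congr rfl (fun x _ => h2 x), Finset.sum_ite_eq' Finset.univ k,
    if_pos (Finset.mem_univ k)]

end Aux

/-- **Lemma 5.1:** for every `a ∈ R^w` and every `i ∈ {1,…,m}`, the coefficient of the
degree-one monomial `y_i` in `Q_S(Y+a)` equals `L_i(a′) = Σ_j A_{i,j}·a′_j + b_i`;
in particular it is zero if and only if `a′` satisfies the `i`-th linear equation.
Moreover, if additionally `a_j = 0` for all `j ≤ w − n`, then for every `i > m` the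
coefficient of `y_i` in `Q_S(Y+a)` is zero. -/
theorem coeff_linear_QS_shift {R : Type*} [CommRing R] (n m : ℕ) (hn : 1 ≤ n)
    (hm : 1 ≤ m) (A : Matrix (Fin m) (Fin n) R)
    (hA : ∀ i, (Finset.univ.filter fun j => A i j ≠ 0).card = 3)
    (b : Fin m → R) (e0 : R) (a : Fin (max (2 * n) (2 * m)) → R) :
    (∀ i : Fin m,
        coeff (Finsupp.single (⟨i.val, by have := i.isLt; omega⟩ :
              Fin (max (2 * n) (2 * m))) 1)
            (shift a (QS n m A b e0))
          = (∑ j, A i j * lastn n m a j) + b i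
        ∧ (coeff (Finsupp.single (⟨i.val, by have := i.isLt; omega⟩ :
              Fin (max (2 * n) (2 * m))) 1)
            (shift a (QS n m A b e0)) = 0
            ↔ (∑ j, A i j * lastn n m a j) + b i = 0))
    ∧ ((∀ j : Fin (max (2 * n) (2 * m)), j.val < max (2 * n) (2 * m) - n → a j = 0) →
        ∀ i : Fin (max (2 * n) (2 * m)), m ≤ i.val →
          coeff (Finsupp.single i 1) (shift a (QS n m A b e0)) = 0) := by
  have hw1 : 2 * n ≤ max (2 * n) (2 * m) := le_max_left _ _
  have hw2 : 2 * m ≤ max (2 * n) (2 * m) := le_max_right _ _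
  have hmain : ∀ k : Fin (max (2 * n) (2 * m)),
      coeff (Finsupp.single k 1) (shift a (QS n m A b e0)) =
        (∑ j, Cmat n m A k j * a j) + (∑ i, Cmat n m A i k * a i) + evec n m b k := by
    intro k
    exact aux_coeff_shift_gen (Cmat n m A) (evec n m b) e0 a k
  constructor
  · intro i
    set k : Fin (max (2 * n) (2 * m)) := ⟨i.val, by have := i.isLt; omega⟩ with hk
    have h2 : (∑ i', Cmat n m A i' k * a i') = 0 := by
      apply Finset.sum_eq_zero
      intro i' _
      have : Cmat n m A i' k = 0 := by
        unfold Cmat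
        rw [if_neg]
        rintro ⟨-, h⟩
        have hkv : k.val = i.val := rfl
        have := i.isLt
        omega
      rw [this, zero_mul]
    have h3 : evec n m b k = b i := by
      unfold evec
      rw [dif_pos i.isLt]
    have h1 : (∑ j, Cmat n m A k j * a j) = ∑ j, A i j * lastn n m a j := by
      have hemb : ∀ j : Fin n, j.val + (max (2 * n) (2 * m) - n) < max (2 * n) (2 * m) := by
        intro j; have := j.isLt; omega
      let emb : Fin n → Fin (max (2 * n) (2 * m)) := fun j => ⟨j.val + (max (2 * n) (2 * m) - n), hemb j⟩
      have hinj : Function.Injective emb := by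
        intro x y h
        have : x.val + (max (2 * n) (2 * m) - n) = y.val + (max (2 * n) (2 * m) - n) := congrArg Fin.val h
        exact Fin.ext (by omega)
      rw [← Finset.sum_subset (Finset.subset_univ
        ((Finset.univ : Finset (Fin n)).image emb))]
      · rw [Finset.sum_image (fun x _ y _ h => hinj h)]
        apply Finset.sum_congr rfl
        intro j _
        have hc : Cmat n m A k (emb j) = A i j := by
          unfold Cmat Aext
          rw [if_pos ⟨i.isLt, Nat.le_add_left _ _⟩]
          have hsub : (emb j).val - (max (2 * n) (2 * m) - n) = j.val := by
            simp [emb]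
          rw [dif_pos (show (k:ℕ) < m ∧ (emb j).val - (max (2 * n) (2 * m) - n) < n from
            ⟨i.isLt, by rw [hsub]; exact j.isLt⟩)]
          congr 1
          exact Fin.ext hsub
        rw [hc]
        rfl
      · intro x _ hx
        have hxlt : x.val < max (2 * n) (2 * m) - n := by
          by_contra hge
          push_neg at hge
          apply hx
          refine Finset.mem_image.2 ⟨⟨x.val - (max (2 * n) (2 * m) - n), by have := x.isLt; omega⟩,
            Finset.mem_univ _, ?_⟩
          exact Fin.ext (by simp [emb]; omega)
        have : Cmat n m A k x = 0 := by
          unfold Cmat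
          rw [if_neg]
          rintro ⟨-, h⟩
          omega
        rw [this, zero_mul]
    refine ⟨?_, ?_⟩
    · rw [hmain k, h1, h2, h3, add_zero]
    · rw [hmain k, h1, h2, h3, add_zero]
  · intro ha k hk
    rw [hmain k]
    have h1 : (∑ j, Cmat n m A k j * a j) = 0 := by
      apply Finset.sum_eq_zero
      intro j _
      have : Cmat n m A k j = 0 := by
        unfold Cmat; rw [if_neg]; rintro ⟨h, -⟩; omega
      rw [this, zero_mul]
    have h2 : (∑ i', Cmat n m A i' k * a i') = 0 := by
      apply Finset.sum_eq_zero
      intro i' _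
      by_cases h : i'.val < m
      · have : a i' = 0 := ha i' (by omega)
        rw [this, mul_zero]
      · have : Cmat n m A i' k = 0 := by
          unfold Cmat; rw [if_neg]; rintro ⟨h', -⟩; exact h h'
        rw [this, zero_mul]
    have h3 : evec n m b k = 0 := by
      unfold evec; rw [dif_neg (by omega)]
    rw [h1, h2, h3, add_zero, add_zero]



end
end

section
/- For every a ∈ R^w, the number of non-constant monomials of the shifted polynomial Q_S(Y+a) is at least 3m + #{i ∈ {1,…,m} : L_i(a′) ≠ 0}; and if a_j = 0 for all 1 ≤ j ≤ w−n, then the number of non-constant monomials of Q_S(Y+a) is exactly 3m + #{i ∈ {1,…,m} : L_i(a′) ≠ 0}. -/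
open MvPolynomial

open scoped Classical

noncomputable section

-- linear coefficient of the shifted polynomial
def linc {R : Type*} [CommRing R] (n m : ℕ) (A : Matrix (Fin m) (Fin n) R)
    (b : Fin m → R) (a : Fin (max (2 * n) (2 * m)) → R)
    (k : Fin (max (2 * n) (2 * m))) : R :=
  (∑ j, Cmat n m A k j * a j) + (∑ i, Cmat n m A i k * a i) + evec n m b k

lemma shift_QS_eq {R : Type*} [CommRing R] (n m : ℕ) (A : Matrix (Fin m) (Fin n) R)
    (b : Fin m → R) (e0 : R) (a : Fin (max (2 * n) (2 * m)) → R) :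
    shift a (QS n m A b e0) =
      (∑ i, ∑ j, monomial (Finsupp.single i 1 + Finsupp.single j 1) (Cmat n m A i j))
      + (∑ k, monomial (Finsupp.single k 1) (linc n m A b a k))
      + C ((∑ i, ∑ j, Cmat n m A i j * a i * a j) + (∑ i, evec n m b i * a i) + e0) := by
  have hX : ∀ (c : R) (i : Fin (max (2 * n) (2 * m))),
      (C c : MvPolynomial (Fin (max (2 * n) (2 * m))) R) * X i = monomial (Finsupp.single i 1) c :=
    fun c i => C_mul_X_eq_monomial
  have hXX : ∀ (c : R) (i j : Fin (max (2 * n) (2 * m))),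
      (C c : MvPolynomial (Fin (max (2 * n) (2 * m))) R) * X i * X j
        = monomial (Finsupp.single i 1 + Finsupp.single j 1) c := by
    intro c i j
    rw [hX, show (X j : MvPolynomial (Fin (max (2 * n) (2 * m))) R)
      = monomial (Finsupp.single j 1) 1 from rfl, monomial_mul, mul_one]
  simp only [shift, QS, map_add, map_sum, map_mul, aeval_X, aeval_C, algebraMap_eq]
  have h1 : ∀ i j : Fin (max (2 * n) (2 * m)),
      (C (Cmat n m A i j) : MvPolynomial (Fin (max (2 * n) (2 * m))) R)
        * (X i + C (a i)) * (X j + C (a j))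
      = monomial (Finsupp.single i 1 + Finsupp.single j 1) (Cmat n m A i j)
        + C (Cmat n m A i j * a j) * X i + C (Cmat n m A i j * a i) * X j
        + C (Cmat n m A i j * a i * a j) := by
    intro i j
    rw [← hXX]
    simp only [map_mul]
    ring
  have h2 : (∑ i, ∑ j, (C (Cmat n m A i j) : MvPolynomial (Fin (max (2 * n) (2 * m))) R)
        * (X i + C (a i)) * (X j + C (a j)))
      = (∑ i, ∑ j, monomial (Finsupp.single i 1 + Finsupp.single j 1) (Cmat n m A i j))
        + (∑ i, ∑ j, C (Cmat n m A i j * a j) * X i)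
        + (∑ i, ∑ j, C (Cmat n m A i j * a i) * X j)
        + (∑ i, ∑ j, (C (Cmat n m A i j * a i * a j) : MvPolynomial (Fin (max (2 * n) (2 * m))) R)) := by
    simp only [h1, Finset.sum_add_distrib]
  rw [h2]
  have hA2 : (∑ i, ∑ j, (C (Cmat n m A i j * a j) : MvPolynomial (Fin (max (2 * n) (2 * m))) R) * X i)
      = ∑ k, C (∑ j, Cmat n m A k j * a j) * X k := by
    refine Finset.sum_congr rfl fun i _ => ?_
    rw [map_sum, Finset.sum_mul]
  have hA3 : (∑ i, ∑ j, (C (Cmat n m A i j * a i) : MvPolynomial (Fin (max (2 * n) (2 * m))) R) * X j)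
      = ∑ k, C (∑ i, Cmat n m A i k * a i) * X k := by
    rw [Finset.sum_comm]
    refine Finset.sum_congr rfl fun j _ => ?_
    rw [map_sum, Finset.sum_mul]
  have hA4 : (∑ i, ∑ j, (C (Cmat n m A i j * a i * a j) : MvPolynomial (Fin (max (2 * n) (2 * m))) R))
      = C (∑ i, ∑ j, Cmat n m A i j * a i * a j) := by
    simp [map_sum]
  have hlin : (∑ i, (C (evec n m b i) : MvPolynomial (Fin (max (2 * n) (2 * m))) R) * (X i + C (a i)))
      = (∑ i, C (evec n m b i) * X i) + C (∑ i, evec n m b i * a i) := by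
    simp only [mul_add, ← map_mul, Finset.sum_add_distrib, map_sum]
  have hR : (∑ k, (monomial (Finsupp.single k 1) (linc n m A b a k) : MvPolynomial (Fin (max (2 * n) (2 * m))) R))
      = (∑ k, C (∑ j, Cmat n m A k j * a j) * X k)
        + (∑ k, C (∑ i, Cmat n m A i k * a i) * X k)
        + (∑ k, C (evec n m b k) * X k) := by
    rw [← Finset.sum_add_distrib, ← Finset.sum_add_distrib]
    refine Finset.sum_congr rfl fun k _ => ?_
    rw [← hX, linc]
    simp only [map_add, add_mul]
  rw [hA2, hA3, hA4, hlin, hR]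
  simp only [← map_mul, ← map_sum]
  ring

lemma coeff_shift_QS {R : Type*} [CommRing R] (n m : ℕ) (A : Matrix (Fin m) (Fin n) R)
    (b : Fin m → R) (e0 : R) (a : Fin (max (2 * n) (2 * m)) → R)
    (u : Fin (max (2 * n) (2 * m)) →₀ ℕ) :
    coeff u (shift a (QS n m A b e0)) =
      (∑ i, ∑ j, if (Finsupp.single i 1 + Finsupp.single j 1) = u then Cmat n m A i j else 0)
      + (∑ k, if (Finsupp.single k 1 : Fin (max (2 * n) (2 * m)) →₀ ℕ) = u then linc n m A b a k else 0)
      + (if 0 = u then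
          ((∑ i, ∑ j, Cmat n m A i j * a i * a j) + (∑ i, evec n m b i * a i) + e0) else 0) := by
  rw [shift_QS_eq]
  simp only [coeff_add, coeff_sum, coeff_monomial, coeff_C]

lemma toMultiset_injective {α : Type*} : Function.Injective (Finsupp.toMultiset (α := α)) := by
  classical
  intro x y h
  have := congrArg Multiset.toFinsupp h
  simpa using this

lemma toMultiset_pair {α : Type*} (i j : α) :
    Finsupp.toMultiset (Finsupp.single i 1 + Finsupp.single j 1) = {i, j} := by
  simp [Finsupp.toMultiset_add]

lemma multiset_pair_eq {α : Type*} {i j p1 p2 : α} :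
    ({i, j} : Multiset α) = {p1, p2} ↔ (i = p1 ∧ j = p2) ∨ (i = p2 ∧ j = p1) := by
  constructor
  · intro h
    rw [Multiset.insert_eq_cons, Multiset.insert_eq_cons, Multiset.cons_eq_cons] at h
    rcases h with ⟨h1, h2⟩ | ⟨hne, cs, h1, h2⟩
    · exact Or.inl ⟨h1, Multiset.singleton_inj.mp h2⟩
    · rw [Multiset.singleton_eq_cons_iff] at h1 h2
      exact Or.inr ⟨h2.1.symm, h1.1⟩
  · rintro (⟨rfl, rfl⟩ | ⟨rfl, rfl⟩)
    · rfl
    · exact Multiset.pair_comm _ _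

lemma pair_eq_iff {α : Type*} (i j p1 p2 : α) :
    Finsupp.single i 1 + Finsupp.single j 1
      = Finsupp.single p1 1 + (Finsupp.single p2 1 : α →₀ ℕ)
    ↔ (i = p1 ∧ j = p2) ∨ (i = p2 ∧ j = p1) := by
  rw [← toMultiset_injective.eq_iff, toMultiset_pair, toMultiset_pair, multiset_pair_eq]

lemma pair_ne_single {α : Type*} (i j k : α) :
    Finsupp.single i 1 + Finsupp.single j 1 ≠ (Finsupp.single k 1 : α →₀ ℕ) := by
  intro h
  have := congrArg (Multiset.card ∘ Finsupp.toMultiset) h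
  simp [toMultiset_pair] at this

lemma pair_ne_zero {α : Type*} (i j : α) :
    Finsupp.single i 1 + Finsupp.single j 1 ≠ (0 : α →₀ ℕ) := by
  intro h
  have := congrArg (Multiset.card ∘ Finsupp.toMultiset) h
  simp [toMultiset_pair] at this

lemma single_ne_zero' {α : Type*} (k : α) : (Finsupp.single k 1 : α →₀ ℕ) ≠ 0 :=
by simp [Finsupp.single_eq_zero]

lemma Cmat_ne_zero_facts {R : Type*} [CommRing R] {n m : ℕ} {A : Matrix (Fin m) (Fin n) R}
    {i j : Fin (max (2 * n) (2 * m))} (h : Cmat n m A i j ≠ 0) :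
    i.val < m ∧ max (2 * n) (2 * m) - n ≤ j.val ∧ j.val - (max (2 * n) (2 * m) - n) < n := by
  unfold Cmat at h
  split_ifs at h with hc
  · unfold Aext at h
    split_ifs at h with hd
    · exact ⟨hc.1, hc.2, hd.2⟩
    · exact absurd rfl h
  · exact absurd rfl h

lemma sum_Cmat_row {R : Type*} [CommRing R] (n m : ℕ) (A : Matrix (Fin m) (Fin n) R)
    (a : Fin (max (2 * n) (2 * m)) → R) (k : Fin (max (2 * n) (2 * m))) (hk : k.val < m) :
    (∑ j, Cmat n m A k j * a j) = ∑ j : Fin n, A ⟨k.val, hk⟩ j * lastn n m a j := by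
  have h1 := Nat.le_max_left (2 * n) (2 * m)
  have h2 := Nat.le_max_right (2 * n) (2 * m)
  let g : Fin n → Fin (max (2 * n) (2 * m)) :=
    fun j => ⟨j.val + (max (2 * n) (2 * m) - n), by have := j.isLt; omega⟩
  have hg : ∀ x ∈ Finset.univ, ∀ y ∈ Finset.univ, g x = g y → x = y := by
    intro x _ y _ h
    have := congrArg Fin.val h
    simp only [g] at this
    exact Fin.ext (by omega)
  have hv : ∀ x ∈ (Finset.univ : Finset (Fin (max (2 * n) (2 * m)))),
      x ∉ Finset.univ.image g → Cmat n m A k x * a x = 0 := by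
    intro x _ hx
    by_cases hge : max (2 * n) (2 * m) - n ≤ x.val
    · exfalso
      apply hx
      refine Finset.mem_image.mpr ⟨⟨x.val - (max (2 * n) (2 * m) - n), by have := x.isLt; omega⟩,
        Finset.mem_univ _, ?_⟩
      apply Fin.ext
      simp only [g]
      omega
    · simp only [Cmat]
      rw [if_neg (fun hc => hge hc.2), zero_mul]
  rw [← Finset.sum_subset (Finset.subset_univ (Finset.univ.image g)) hv,
      Finset.sum_image hg]
  refine Finset.sum_congr rfl fun j _ => ?_
  have hCg : Cmat n m A k (g j) = A ⟨k.val, hk⟩ j := by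
    simp only [Cmat, g]
    rw [if_pos ⟨hk, by omega⟩]
    have hidx : (j.val + (max (2 * n) (2 * m) - n)) - (max (2 * n) (2 * m) - n) = j.val := by
      omega
    simp only [Aext, hidx]
    rw [dif_pos ⟨hk, j.isLt⟩]
  rw [hCg]
  rfl

lemma sum_Cmat_col_zero {R : Type*} [CommRing R] (n m : ℕ) (A : Matrix (Fin m) (Fin n) R)
    (a : Fin (max (2 * n) (2 * m)) → R) (k : Fin (max (2 * n) (2 * m)))
    (hk : k.val < max (2 * n) (2 * m) - n) :
    (∑ i, Cmat n m A i k * a i) = 0 := by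
  refine Finset.sum_eq_zero fun i _ => ?_
  simp only [Cmat]
  rw [if_neg (fun hc => by omega), zero_mul]

lemma linc_lt {R : Type*} [CommRing R] (n m : ℕ) (A : Matrix (Fin m) (Fin n) R)
    (b : Fin m → R) (a : Fin (max (2 * n) (2 * m)) → R)
    (k : Fin (max (2 * n) (2 * m))) (hk : k.val < m) :
    linc n m A b a k = (∑ j : Fin n, A ⟨k.val, hk⟩ j * lastn n m a j) + b ⟨k.val, hk⟩ := by
  have h1 := Nat.le_max_left (2 * n) (2 * m)
  have h2 := Nat.le_max_right (2 * n) (2 * m)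
  rw [linc, sum_Cmat_row n m A a k hk, sum_Cmat_col_zero n m A a k (by omega)]
  rw [evec, dif_pos hk]
  ring

lemma linc_mid {R : Type*} [CommRing R] (n m : ℕ) (A : Matrix (Fin m) (Fin n) R)
    (b : Fin m → R) (a : Fin (max (2 * n) (2 * m)) → R)
    (k : Fin (max (2 * n) (2 * m))) (hk1 : m ≤ k.val) (hk2 : k.val < max (2 * n) (2 * m) - n) :
    linc n m A b a k = 0 := by
  rw [linc, sum_Cmat_col_zero n m A a k hk2]
  have hrow : (∑ j, Cmat n m A k j * a j) = 0 := by
    refine Finset.sum_eq_zero fun j _ => ?_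
    simp only [Cmat]
    rw [if_neg (fun hc => by omega), zero_mul]
  rw [hrow, evec, dif_neg (by omega)]
  ring

lemma linc_hi {R : Type*} [CommRing R] (n m : ℕ) (A : Matrix (Fin m) (Fin n) R)
    (b : Fin m → R) (a : Fin (max (2 * n) (2 * m)) → R)
    (k : Fin (max (2 * n) (2 * m))) (hk : max (2 * n) (2 * m) - n ≤ k.val)
    (hva : ∀ j : Fin (max (2 * n) (2 * m)), j.val < max (2 * n) (2 * m) - n → a j = 0) :
    linc n m A b a k = 0 := by
  have h1 := Nat.le_max_left (2 * n) (2 * m)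
  have h2 := Nat.le_max_right (2 * n) (2 * m)
  have hrow : (∑ j, Cmat n m A k j * a j) = 0 := by
    refine Finset.sum_eq_zero fun j _ => ?_
    simp only [Cmat]
    rw [if_neg (fun hc => by omega), zero_mul]
  have hcol : (∑ i, Cmat n m A i k * a i) = 0 := by
    refine Finset.sum_eq_zero fun i _ => ?_
    by_cases hi : i.val < max (2 * n) (2 * m) - n
    · rw [hva i hi, mul_zero]
    · simp only [Cmat]
      rw [if_neg (fun hc => by omega), zero_mul]
  rw [linc, hrow, hcol, evec, dif_neg (by omega)]
  ring

lemma card_T2 {R : Type*} [CommRing R] (n m : ℕ) (hn : 1 ≤ n) (hm : 1 ≤ m)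
    (A : Matrix (Fin m) (Fin n) R)
    (hA : ∀ i, (Finset.univ.filter fun j => A i j ≠ 0).card = 3) :
    (Finset.univ.filter fun p : Fin (max (2 * n) (2 * m)) × Fin (max (2 * n) (2 * m)) =>
      Cmat n m A p.1 p.2 ≠ 0).card = 3 * m := by
  have h1 := Nat.le_max_left (2 * n) (2 * m)
  have h2 := Nat.le_max_right (2 * n) (2 * m)
  let emb2 : Fin m × Fin n → Fin (max (2 * n) (2 * m)) × Fin (max (2 * n) (2 * m)) :=
    fun q => (⟨q.1.val, by have := q.1.isLt; omega⟩,
              ⟨q.2.val + (max (2 * n) (2 * m) - n), by have := q.2.isLt; omega⟩)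
  have hinj : Function.Injective emb2 := by
    intro x y h
    have hv1 := congrArg (fun p => p.1.val) h
    have hv2 := congrArg (fun p => p.2.val) h
    simp only [emb2] at hv1 hv2
    exact Prod.ext (Fin.ext (by omega)) (Fin.ext (by omega))
  have himg : (Finset.univ.filter fun p : Fin (max (2 * n) (2 * m)) × Fin (max (2 * n) (2 * m)) =>
      Cmat n m A p.1 p.2 ≠ 0)
      = (Finset.univ.filter fun q : Fin m × Fin n => A q.1 q.2 ≠ 0).image emb2 := by
    ext p
    simp only [Finset.mem_filter, Finset.mem_image, Finset.mem_univ, true_and]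
    constructor
    · intro hp
      obtain ⟨hi, hj, hjn⟩ := Cmat_ne_zero_facts hp
      refine ⟨(⟨p.1.val, hi⟩, ⟨p.2.val - (max (2 * n) (2 * m) - n), hjn⟩), ?_, ?_⟩
      · intro hz
        apply hp
        simp only [Cmat, Aext]
        rw [if_pos ⟨hi, hj⟩, dif_pos ⟨hi, hjn⟩]
        exact hz
      · refine Prod.ext (Fin.ext ?_) (Fin.ext ?_) <;> simp only [emb2] <;> omega
    · rintro ⟨q, hq, rfl⟩
      intro hz
      apply hq
      have hidx : (q.2.val + (max (2 * n) (2 * m) - n)) - (max (2 * n) (2 * m) - n) = q.2.val := by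
        omega
      simp only [Cmat, Aext, emb2, hidx] at hz
      rw [if_pos ⟨q.1.isLt, by omega⟩, dif_pos ⟨q.1.isLt, q.2.isLt⟩] at hz
      simpa using hz
  rw [himg, Finset.card_image_of_injective _ hinj]
  rw [Finset.card_eq_sum_card_fiberwise (f := Prod.fst) (t := Finset.univ)
    (fun x _ => Finset.mem_univ _)]
  have hfib : ∀ i : Fin m,
      ((Finset.univ.filter fun q : Fin m × Fin n => A q.1 q.2 ≠ 0).filter
        fun q => q.1 = i).card = 3 := by
    intro i
    rw [← hA i]
    refine Finset.card_bij' (fun q _ => q.2) (fun j _ => (i, j)) ?_ ?_ ?_ ?_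
    · intro q hq
      simp only [Finset.mem_filter, Finset.mem_univ, true_and] at hq ⊢
      rcases hq with ⟨hq1, hq2⟩
      rw [← hq2]
      exact hq1
    · intro j hj
      simp only [Finset.mem_filter, Finset.mem_univ, true_and] at hj ⊢
      exact ⟨hj, trivial⟩
    · intro q hq
      simp only [Finset.mem_filter] at hq
      obtain ⟨qa, qb⟩ := q
      obtain ⟨-, h2⟩ := hq
      cases h2
      rfl
    · intro j _
      rfl
  rw [Finset.sum_congr rfl fun i _ => hfib i]
  simp [mul_comm]


/-- **Count behind Lemma 5.2:** for every `a ∈ R^w`, the number of non-constant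
monomials of `Q_S(Y+a)` is at least `3m + #{i : L_i(a′) ≠ 0}`; and if `a_j = 0` for all
`j ≤ w − n`, then the number of non-constant monomials of `Q_S(Y+a)` is exactly
`3m + #{i : L_i(a′) ≠ 0}`. -/
theorem nonConst_QS_shift_count {R : Type*} [CommRing R] (n m : ℕ) (hn : 1 ≤ n)
    (hm : 1 ≤ m) (A : Matrix (Fin m) (Fin n) R)
    (hA : ∀ i, (Finset.univ.filter fun j => A i j ≠ 0).card = 3)
    (b : Fin m → R) (e0 : R) (a : Fin (max (2 * n) (2 * m)) → R) :
    3 * m + (Finset.univ.filter fun i : Fin m =>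
        (∑ j, A i j * lastn n m a j) + b i ≠ 0).card
      ≤ nonConst (shift a (QS n m A b e0))
    ∧ ((∀ j : Fin (max (2 * n) (2 * m)), j.val < max (2 * n) (2 * m) - n → a j = 0) →
        nonConst (shift a (QS n m A b e0))
          = 3 * m + (Finset.univ.filter fun i : Fin m =>
              (∑ j, A i j * lastn n m a j) + b i ≠ 0).card) := by
  have h1 := Nat.le_max_left (2 * n) (2 * m)
  have h2 := Nat.le_max_right (2 * n) (2 * m)
  set S1 : Finset (Fin m) :=
    Finset.univ.filter fun i : Fin m => (∑ j, A i j * lastn n m a j) + b i ≠ 0 with hS1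
  set T2 : Finset (Fin (max (2 * n) (2 * m)) × Fin (max (2 * n) (2 * m))) :=
    Finset.univ.filter fun p => Cmat n m A p.1 p.2 ≠ 0 with hT2
  set d : Fin (max (2 * n) (2 * m)) × Fin (max (2 * n) (2 * m)) →
      (Fin (max (2 * n) (2 * m)) →₀ ℕ) :=
    fun p => Finsupp.single p.1 1 + Finsupp.single p.2 1 with hd
  set sg : Fin m → (Fin (max (2 * n) (2 * m)) →₀ ℕ) :=
    fun i => Finsupp.single (⟨i.val, by have := i.isLt; omega⟩ : Fin (max (2 * n) (2 * m))) 1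
    with hsg
  set E : Finset (Fin (max (2 * n) (2 * m)) →₀ ℕ) := T2.image d ∪ S1.image sg with hE
  -- coefficient at a degree-2 monomial coming from T2
  have hcoeff_d : ∀ p ∈ T2, coeff (d p) (shift a (QS n m A b e0)) = Cmat n m A p.1 p.2 := by
    intro p hp
    have hpC : Cmat n m A p.1 p.2 ≠ 0 := (Finset.mem_filter.mp hp).2
    obtain ⟨hi, hj, -⟩ := Cmat_ne_zero_facts hpC
    have hne : p.1 ≠ p.2 := by
      intro hh
      have := congrArg Fin.val hh
      omega
    rw [coeff_shift_QS]
    rw [if_neg (fun h => pair_ne_zero p.1 p.2 h.symm)]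
    have hlin0 : (∑ k, if (Finsupp.single k 1 : Fin (max (2 * n) (2 * m)) →₀ ℕ) = d p
        then linc n m A b a k else 0) = 0 :=
      Finset.sum_eq_zero fun k _ => if_neg (fun h => pair_ne_single p.1 p.2 k h.symm)
    have hq : (∑ i, ∑ j, if (Finsupp.single i 1 + Finsupp.single j 1) = d p
        then Cmat n m A i j else 0) = Cmat n m A p.1 p.2 + Cmat n m A p.2 p.1 := by
      have hterm : ∀ i j : Fin (max (2 * n) (2 * m)),
          (if (Finsupp.single i 1 + Finsupp.single j 1) = d p then Cmat n m A i j else 0)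
          = (if i = p.1 then (if j = p.2 then Cmat n m A i j else 0) else 0)
            + (if i = p.2 then (if j = p.1 then Cmat n m A i j else 0) else 0) := by
        intro i j
        rw [hd]
        simp only [pair_eq_iff]
        by_cases h12 : i = p.1 ∧ j = p.2 <;> by_cases h34 : i = p.2 ∧ j = p.1
        · exact absurd (h12.1.symm.trans h34.1) hne
        · rw [if_pos (Or.inl h12), if_pos h12.1, if_pos h12.2]
          rcases (not_and_or.mp h34) with hc | hc
          · rw [if_neg hc, add_zero]
          · rw [if_neg hc]
            by_cases hc2 : i = p.2 <;> simp [hc2]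
        · rw [if_pos (Or.inr h34), if_pos h34.1, if_pos h34.2]
          rcases (not_and_or.mp h12) with hc | hc
          · rw [if_neg hc, zero_add, h34.1, h34.2]
          · rw [if_neg hc]
            by_cases hc2 : i = p.1 <;> simp [hc2, h34.1, h34.2]
        · rw [if_neg (by tauto)]
          rcases (not_and_or.mp h12) with hc | hc <;> rcases (not_and_or.mp h34) with hc' | hc' <;>
            simp [hc, hc'] <;> by_cases hx : i = p.1 <;> by_cases hy : i = p.2 <;> simp_all
      rw [Finset.sum_congr rfl fun i _ => Finset.sum_congr rfl fun j _ => hterm i j]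
      simp only [Finset.sum_add_distrib]
      have hone : ∀ (q1 q2 : Fin (max (2 * n) (2 * m))),
          (∑ i, ∑ j, if i = q1 then (if j = q2 then Cmat n m A i j else 0) else 0)
            = Cmat n m A q1 q2 := by
        intro q1 q2
        rw [Finset.sum_eq_single_of_mem q1 (Finset.mem_univ _)
          (fun i _ hine => Finset.sum_eq_zero fun j _ => if_neg hine)]
        simp [Finset.sum_ite_eq']
      rw [hone, hone]
    rw [hq, hlin0]
    have hzero : Cmat n m A p.2 p.1 = 0 := by
      simp only [Cmat]
      rw [if_neg (fun hc => by omega)]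
    rw [hzero]
    ring
  -- coefficient at a degree-1 monomial
  have hcoeff_s : ∀ k : Fin (max (2 * n) (2 * m)),
      coeff (Finsupp.single k 1) (shift a (QS n m A b e0)) = linc n m A b a k := by
    intro k
    rw [coeff_shift_QS]
    rw [if_neg (fun h => single_ne_zero' k h.symm)]
    have hq0 : (∑ i, ∑ j, if (Finsupp.single i 1 + Finsupp.single j 1)
        = (Finsupp.single k 1 : Fin (max (2 * n) (2 * m)) →₀ ℕ) then Cmat n m A i j else 0) = 0 :=
      Finset.sum_eq_zero fun i _ => Finset.sum_eq_zero fun j _ =>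
        if_neg (pair_ne_single i j k)
    have hl : (∑ k', if (Finsupp.single k' 1 : Fin (max (2 * n) (2 * m)) →₀ ℕ)
        = Finsupp.single k 1 then linc n m A b a k' else 0) = linc n m A b a k := by
      have : ∀ k' : Fin (max (2 * n) (2 * m)),
          (if (Finsupp.single k' 1 : Fin (max (2 * n) (2 * m)) →₀ ℕ) = Finsupp.single k 1
            then linc n m A b a k' else 0)
          = (if k' = k then linc n m A b a k' else 0) := by
        intro k'
        by_cases hc : k' = k
        · rw [if_pos hc, if_pos (by rw [hc])]
        · rw [if_neg hc, if_neg (fun h => hc ((Finsupp.single_left_inj one_ne_zero).mp h))]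
      rw [Finset.sum_congr rfl fun k' _ => this k']
      rw [Finset.sum_ite_eq' Finset.univ k (fun k' => linc n m A b a k')]
      simp
    rw [hq0, hl]
    ring
  -- E is contained in the set of non-constant monomials
  have hEsub : E ⊆ (shift a (QS n m A b e0)).support.filter (fun mo => mo ≠ 0) := by
    intro u hu
    rw [hE, Finset.mem_union] at hu
    rcases hu with hu | hu
    · obtain ⟨p, hp, rfl⟩ := Finset.mem_image.mp hu
      have hpC : Cmat n m A p.1 p.2 ≠ 0 := (Finset.mem_filter.mp hp).2
      rw [Finset.mem_filter, mem_support_iff, hcoeff_d p hp]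
      exact ⟨hpC, pair_ne_zero _ _⟩
    · obtain ⟨i, hi, rfl⟩ := Finset.mem_image.mp hu
      have hiS : (∑ j, A i j * lastn n m a j) + b i ≠ 0 := (Finset.mem_filter.mp hi).2
      rw [Finset.mem_filter, mem_support_iff]
      constructor
      · rw [hsg]
        rw [hcoeff_s]
        rw [linc_lt n m A b a _ i.isLt]
        simpa using hiS
      · exact single_ne_zero' _
  -- cardinality of E
  have hdisj : Disjoint (T2.image d) (S1.image sg) := by
    rw [Finset.disjoint_left]
    rintro u hu1 hu2
    obtain ⟨p, -, rfl⟩ := Finset.mem_image.mp hu1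
    obtain ⟨i, -, hi⟩ := Finset.mem_image.mp hu2
    exact pair_ne_single p.1 p.2 _ hi.symm
  have hinj_d : Set.InjOn d T2 := by
    intro p hp q hq h
    have hpf := Cmat_ne_zero_facts (Finset.mem_filter.mp hp).2
    have hqf := Cmat_ne_zero_facts (Finset.mem_filter.mp hq).2
    rw [hd] at h
    simp only [pair_eq_iff] at h
    rcases h with ⟨ha, hb⟩ | ⟨ha, hb⟩
    · exact Prod.ext ha hb
    · exfalso
      have := congrArg Fin.val ha
      omega
  have hinj_s : Set.InjOn sg S1 := by
    intro i _ j _ h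
    rw [hsg] at h
    have h3 := (Finsupp.single_left_inj one_ne_zero).mp h
    have h4 := congrArg Fin.val h3
    exact Fin.ext (by simpa using h4)
  have hcardE : E.card = 3 * m + S1.card := by
    rw [hE, Finset.card_union_of_disjoint hdisj, Finset.card_image_of_injOn hinj_d,
      Finset.card_image_of_injOn hinj_s, hT2, card_T2 n m hn hm A hA]
  have hNC : nonConst (shift a (QS n m A b e0))
      = ((shift a (QS n m A b e0)).support.filter (fun mo => mo ≠ 0)).card := by
    unfold nonConst
    congr 1
    exact Finset.filter_congr_decidable _ _ _
  constructor
  · rw [hNC]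
    calc 3 * m + S1.card = E.card := hcardE.symm
      _ ≤ ((shift a (QS n m A b e0)).support.filter (fun mo => mo ≠ 0)).card :=
        Finset.card_le_card hEsub
  · intro hva
    have hsub2 : (shift a (QS n m A b e0)).support.filter (fun mo => mo ≠ 0) ⊆ E := by
      intro u hu
      rw [Finset.mem_filter, mem_support_iff] at hu
      obtain ⟨hcu, hu0⟩ := hu
      rw [coeff_shift_QS, if_neg (fun h => hu0 h.symm), add_zero] at hcu
      by_cases ht1 : (∑ i, ∑ j, if (Finsupp.single i 1 + Finsupp.single j 1) = u
          then Cmat n m A i j else 0) = 0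
      · have ht2 : (∑ k, if (Finsupp.single k 1 : Fin (max (2 * n) (2 * m)) →₀ ℕ) = u
            then linc n m A b a k else 0) ≠ 0 := by
          intro h
          apply hcu
          rw [ht1, h, add_zero]
        obtain ⟨k, -, hk⟩ := Finset.exists_ne_zero_of_sum_ne_zero ht2
        have hke : (Finsupp.single k 1 : Fin (max (2 * n) (2 * m)) →₀ ℕ) = u
            ∧ linc n m A b a k ≠ 0 := by
          by_cases hc : (Finsupp.single k 1 : Fin (max (2 * n) (2 * m)) →₀ ℕ) = u
          · refine ⟨hc, ?_⟩
            rw [if_pos hc] at hk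
            exact hk
          · rw [if_neg hc] at hk
            exact absurd rfl hk
        rcases lt_or_ge k.val m with hkm | hkm
        · apply Finset.mem_union_right
          refine Finset.mem_image.mpr ⟨⟨k.val, hkm⟩, ?_, ?_⟩
          · rw [hS1, Finset.mem_filter]
            refine ⟨Finset.mem_univ _, ?_⟩
            have h5 := hke.2
            rw [linc_lt n m A b a k hkm] at h5
            exact h5
          · rw [← hke.1, hsg]
        rcases lt_or_ge k.val (max (2 * n) (2 * m) - n) with hkw | hkw
        · exact absurd (linc_mid n m A b a k hkm hkw) hke.2
        · exact absurd (linc_hi n m A b a k hkw hva) hke.2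
      · obtain ⟨i, -, hi⟩ := Finset.exists_ne_zero_of_sum_ne_zero ht1
        obtain ⟨j, -, hj⟩ := Finset.exists_ne_zero_of_sum_ne_zero hi
        have hje : (Finsupp.single i 1 + Finsupp.single j 1 : Fin (max (2 * n) (2 * m)) →₀ ℕ) = u
            ∧ Cmat n m A i j ≠ 0 := by
          by_cases hc : (Finsupp.single i 1 + Finsupp.single j 1 :
              Fin (max (2 * n) (2 * m)) →₀ ℕ) = u
          · refine ⟨hc, ?_⟩
            rw [if_pos hc] at hj
            exact hj
          · rw [if_neg hc] at hj
            exact absurd rfl hj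
        apply Finset.mem_union_left
        exact Finset.mem_image.mpr
          ⟨(i, j), Finset.mem_filter.mpr ⟨Finset.mem_univ _, hje.2⟩, hje.1⟩
    have heq : (shift a (QS n m A b e0)).support.filter (fun mo => mo ≠ 0) = E :=
      Finset.Subset.antisymm hsub2 hEsub
    rw [hNC, heq, hcardE]

end
end

section
/- Let ε be a real number with 0 ≤ ε ≤ 1, and let a ∈ R^w satisfy a_j = 0 for all 1 ≤ j ≤ w−n. Then a′ satisfies at least (1−ε)·m of the m linear equations (i.e. #{i : L_i(a′) = 0} ≥ (1−ε)·m) if and only if the shifted polynomial Q_S(Y+a) has at most (3+ε)·m non-constant monomials; in that case Q_S(Y+a) has at most (3+ε)·m + 1 monomials in total. -/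
open MvPolynomial

open scoped Classical

noncomputable section

/-! ### Auxiliary definitions and lemmas for the proof -/

def idx1 (n m : ℕ) (i : Fin m) : Fin (max (2 * n) (2 * m)) :=
  ⟨i.val, by have := i.isLt; omega⟩

def idx2 (n m : ℕ) (j : Fin n) : Fin (max (2 * n) (2 * m)) :=
  ⟨j.val + (max (2 * n) (2 * m) - n), by have := j.isLt; omega⟩

def dmap (n m : ℕ) : (Fin m × Fin n) ⊕ (Fin m ⊕ Unit) → (Fin (max (2 * n) (2 * m)) →₀ ℕ) :=
  Sum.elim (fun p => Finsupp.single (idx1 n m p.1) 1 + Finsupp.single (idx2 n m p.2) 1)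
    (Sum.elim (fun i => Finsupp.single (idx1 n m i) 1) (fun _ => 0))

def cmap {R : Type*} [CommRing R] (n m : ℕ) (A : Matrix (Fin m) (Fin n) R) (b : Fin m → R)
    (e0 : R) (a : Fin (max (2 * n) (2 * m)) → R) : (Fin m × Fin n) ⊕ (Fin m ⊕ Unit) → R :=
  Sum.elim (fun p => A p.1 p.2)
    (Sum.elim (fun i => (∑ j, A i j * lastn n m a j) + b i) (fun _ => e0))

lemma idx1_lt (n m : ℕ) (i : Fin m) : (idx1 n m i).val < max (2 * n) (2 * m) - n := by
  have h1 := i.isLt; simp only [idx1]; omega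

lemma idx2_ge (n m : ℕ) (j : Fin n) : max (2 * n) (2 * m) - n ≤ (idx2 n m j).val := by
  simp [idx2]

lemma idx1_ne_idx2 (n m : ℕ) (i : Fin m) (j : Fin n) : idx1 n m i ≠ idx2 n m j := by
  have := idx1_lt n m i; have := idx2_ge n m j
  intro h; rw [Fin.ext_iff] at h; omega

lemma idx2_ne_idx1 (n m : ℕ) (i : Fin m) (j : Fin n) : idx2 n m j ≠ idx1 n m i :=
  (idx1_ne_idx2 n m i j).symm

lemma idx1_inj_iff (n m : ℕ) (i i' : Fin m) : idx1 n m i = idx1 n m i' ↔ i = i' := by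
  simp [idx1, Fin.ext_iff]

lemma idx2_inj_iff (n m : ℕ) (j j' : Fin n) : idx2 n m j = idx2 n m j' ↔ j = j' := by
  simp [idx2, Fin.ext_iff]

lemma dmap_inj (n m : ℕ) : Function.Injective (dmap n m) := by
  intro x y h
  rcases x with p | i | u <;> rcases y with q | i' | u'
  · have h1 := DFunLike.congr_fun h (idx1 n m p.1)
    have h2 := DFunLike.congr_fun h (idx2 n m p.2)
    simp only [dmap, Sum.elim_inl, Finsupp.add_apply, Finsupp.single_apply,
      if_pos rfl] at h1 h2
    rw [if_neg (idx2_ne_idx1 n m p.1 p.2)] at h1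
    rw [if_neg (idx1_ne_idx2 n m p.1 p.2)] at h2
    have e1 : idx1 n m q.1 = idx1 n m p.1 := by
      by_contra hc
      rw [if_neg hc, if_neg (idx2_ne_idx1 n m p.1 q.2)] at h1; simp at h1
    have e2 : idx2 n m q.2 = idx2 n m p.2 := by
      by_contra hc
      rw [if_neg hc, if_neg (idx1_ne_idx2 n m q.1 p.2)] at h2; simp at h2
    have e1' := (idx1_inj_iff n m q.1 p.1).mp e1
    have e2' := (idx2_inj_iff n m q.2 p.2).mp e2
    congr 1; exact Prod.ext e1'.symm e2'.symm
  · exfalso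
    have h2 := DFunLike.congr_fun h (idx2 n m p.2)
    simp only [dmap, Sum.elim_inl, Sum.elim_inr, Finsupp.add_apply, Finsupp.single_apply,
      if_pos rfl] at h2
    rw [if_neg (idx1_ne_idx2 n m p.1 p.2)] at h2
    rw [if_neg (idx1_ne_idx2 n m i' p.2)] at h2
    simp at h2
  · exfalso
    have h2 := DFunLike.congr_fun h (idx2 n m p.2)
    simp only [dmap, Sum.elim_inl, Sum.elim_inr, Finsupp.add_apply, Finsupp.single_apply,
      if_pos rfl, Finsupp.coe_zero, Pi.zero_apply] at h2
    rw [if_neg (idx1_ne_idx2 n m p.1 p.2)] at h2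
    simp at h2
  · exfalso
    have h2 := DFunLike.congr_fun h (idx2 n m q.2)
    simp only [dmap, Sum.elim_inl, Sum.elim_inr, Finsupp.add_apply, Finsupp.single_apply,
      if_pos rfl] at h2
    rw [if_neg (idx1_ne_idx2 n m q.1 q.2)] at h2
    rw [if_neg (idx1_ne_idx2 n m i q.2)] at h2
    simp at h2
  · have h1 := DFunLike.congr_fun h (idx1 n m i)
    simp only [dmap, Sum.elim_inr, Sum.elim_inl, Finsupp.single_apply, if_pos rfl] at h1
    have e1 : idx1 n m i' = idx1 n m i := by
      by_contra hc; rw [if_neg hc] at h1; simp at h1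
    have := (idx1_inj_iff n m i' i).mp e1
    simp [this]
  · exfalso
    have h1 := DFunLike.congr_fun h (idx1 n m i)
    simp [dmap, Finsupp.single_apply] at h1
  · exfalso
    have h2 := DFunLike.congr_fun h (idx2 n m q.2)
    simp only [dmap, Sum.elim_inl, Sum.elim_inr, Finsupp.add_apply, Finsupp.single_apply,
      if_pos rfl, Finsupp.coe_zero, Pi.zero_apply] at h2
    rw [if_neg (idx1_ne_idx2 n m q.1 q.2)] at h2
    simp at h2
  · exfalso
    have h1 := DFunLike.congr_fun h (idx1 n m i')
    simp [dmap, Finsupp.single_apply] at h1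
  · rfl

lemma dmap_ne_zero_iff (n m : ℕ) (x : (Fin m × Fin n) ⊕ (Fin m ⊕ Unit)) :
    dmap n m x ≠ 0 ↔ ∀ u : Unit, x ≠ Sum.inr (Sum.inr u) := by
  constructor
  · rintro h u rfl; exact h rfl
  · intro h
    have hne : x ≠ Sum.inr (Sum.inr ()) := h ()
    rcases x with p | i | u
    · intro hz
      have h2 := DFunLike.congr_fun hz (idx2 n m p.2)
      simp only [dmap, Sum.elim_inl, Finsupp.add_apply, Finsupp.single_apply, if_pos rfl,
        Finsupp.coe_zero, Pi.zero_apply] at h2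
      rw [if_neg (idx1_ne_idx2 n m p.1 p.2)] at h2
      simp at h2
    · intro hz
      have h1 := DFunLike.congr_fun hz (idx1 n m i)
      simp [dmap, Finsupp.single_apply] at h1
    · exact absurd rfl hne

lemma support_sum_monomial_inj {σ ι R : Type*} [Fintype ι] [CommRing R]
    (d : ι → (σ →₀ ℕ)) (c : ι → R) (hd : Function.Injective d) :
    (∑ x : ι, monomial (d x) (c x)).support
      = (Finset.univ.filter fun x => c x ≠ 0).image d := by
  ext e
  simp only [mem_support_iff, coeff_sum, coeff_monomial, Finset.mem_image,
    Finset.mem_filter, Finset.mem_univ, true_and]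
  constructor
  · intro h
    obtain ⟨x, -, hx⟩ := Finset.exists_ne_zero_of_sum_ne_zero h
    by_cases hde : d x = e
    · rw [if_pos hde] at hx; exact ⟨x, hx, hde⟩
    · rw [if_neg hde] at hx; exact absurd rfl hx
  · rintro ⟨x, hcx, rfl⟩
    rw [Finset.sum_eq_single x (fun y _ hy => if_neg (fun hdy => hy (hd hdy)))
      (fun hx => absurd (Finset.mem_univ x) hx)]
    simpa using hcx

lemma Cmat_idx {R : Type*} [CommRing R] (n m : ℕ) (A : Matrix (Fin m) (Fin n) R)
    (i : Fin m) (j : Fin n) : Cmat n m A (idx1 n m i) (idx2 n m j) = A i j := by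
  have hi := i.isLt; have hj := j.isLt
  rw [Cmat, if_pos (by constructor <;> simp [idx1, idx2])]
  simp only [idx1, idx2, Nat.add_sub_cancel]
  rw [Aext, dif_pos ⟨hi, hj⟩]

lemma evec_idx {R : Type*} [CommRing R] (n m : ℕ) (b : Fin m → R) (i : Fin m) :
    evec n m b (idx1 n m i) = b i := by
  rw [evec, dif_pos (show (idx1 n m i).val < m from i.isLt)]
  exact congrArg b (Fin.ext rfl)

lemma Cmat_eq_zero {R : Type*} [CommRing R] (n m : ℕ) (A : Matrix (Fin m) (Fin n) R)
    (q : Fin (max (2 * n) (2 * m)) × Fin (max (2 * n) (2 * m)))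
    (hq : q ∉ Finset.univ.image (fun p : Fin m × Fin n => (idx1 n m p.1, idx2 n m p.2))) :
    Cmat n m A q.1 q.2 = 0 := by
  rcases Classical.em (q.1.val < m ∧ max (2 * n) (2 * m) - n ≤ q.2.val) with h | h
  · exfalso
    apply hq
    have h2 := q.2.isLt
    refine Finset.mem_image.mpr ⟨(⟨q.1.val, h.1⟩, ⟨q.2.val - (max (2 * n) (2 * m) - n), by omega⟩),
      Finset.mem_univ _, ?_⟩
    refine Prod.ext (Fin.ext ?_) (Fin.ext ?_) <;> simp [idx1, idx2] <;> omega
  · rw [Cmat, if_neg h]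

lemma evec_eq_zero {R : Type*} [CommRing R] (n m : ℕ) (b : Fin m → R)
    (q : Fin (max (2 * n) (2 * m)))
    (hq : q ∉ Finset.univ.image (idx1 n m)) : evec n m b q = 0 := by
  rcases Classical.em (q.val < m) with h | h
  · exfalso
    apply hq
    refine Finset.mem_image.mpr ⟨⟨q.val, h⟩, Finset.mem_univ _, ?_⟩
    exact Fin.ext rfl
  · rw [evec, dif_neg h]

lemma QS_eq {R : Type*} [CommRing R] (n m : ℕ) (A : Matrix (Fin m) (Fin n) R)
    (b : Fin m → R) (e0 : R) :
    QS n m A b e0 =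
      (∑ p : Fin m × Fin n, C (A p.1 p.2) * X (idx1 n m p.1) * X (idx2 n m p.2))
        + (∑ i : Fin m, C (b i) * X (idx1 n m i)) + C e0 := by
  rw [QS]
  congr 1
  congr 1
  · rw [show (∑ i, ∑ j, C (Cmat n m A i j) * X i * X j)
        = ∑ q : Fin (max (2*n) (2*m)) × Fin (max (2*n) (2*m)),
            C (Cmat n m A q.1 q.2) * X q.1 * X q.2 from
      (Fintype.sum_prod_type (f := fun q => C (Cmat n m A q.1 q.2) * X q.1 * X q.2)).symm]
    have hinj : ∀ x ∈ (Finset.univ : Finset (Fin m × Fin n)), ∀ y ∈ Finset.univ,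
        (fun p : Fin m × Fin n => (idx1 n m p.1, idx2 n m p.2)) x
          = (fun p : Fin m × Fin n => (idx1 n m p.1, idx2 n m p.2)) y → x = y := by
      intro x _ y _ hxy
      simp only [Prod.mk.injEq, idx1, idx2, Fin.mk.injEq] at hxy
      exact Prod.ext (Fin.ext hxy.1) (Fin.ext (by omega))
    rw [← Finset.sum_subset (Finset.subset_univ
        ((Finset.univ : Finset (Fin m × Fin n)).image
          (fun p => (idx1 n m p.1, idx2 n m p.2))))
      (fun q _ hq => by rw [Cmat_eq_zero n m A q hq]; simp),
      Finset.sum_image hinj]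
    exact Finset.sum_congr rfl fun p _ => by rw [Cmat_idx]
  · have hinj : ∀ x ∈ (Finset.univ : Finset (Fin m)), ∀ y ∈ Finset.univ,
        idx1 n m x = idx1 n m y → x = y := by
      intro x _ y _ hxy
      simp only [idx1, Fin.mk.injEq] at hxy
      exact Fin.ext hxy
    rw [← Finset.sum_subset (Finset.subset_univ ((Finset.univ : Finset (Fin m)).image (idx1 n m)))
      (fun q _ hq => by rw [evec_eq_zero n m b q hq]; simp),
      Finset.sum_image hinj]
    exact Finset.sum_congr rfl fun i _ => by rw [evec_idx]

lemma CX_eq_monomial {R : Type*} [CommRing R] {σ : Type*} (c : R) (i : σ) :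
    C c * X i = monomial (Finsupp.single i 1) c := by
  rw [X, C_apply, monomial_mul]; simp

lemma CXX_eq_monomial {R : Type*} [CommRing R] {σ : Type*} (c : R) (i j : σ) :
    C c * X i * X j = monomial (Finsupp.single i 1 + Finsupp.single j 1) c := by
  rw [X, X, C_apply, monomial_mul, monomial_mul]; simp [add_assoc]

lemma shift_QS {R : Type*} [CommRing R] (n m : ℕ) (A : Matrix (Fin m) (Fin n) R)
    (b : Fin m → R) (e0 : R) (a : Fin (max (2 * n) (2 * m)) → R)
    (hsupp : ∀ j : Fin (max (2 * n) (2 * m)), j.val < max (2 * n) (2 * m) - n → a j = 0) :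
    shift a (QS n m A b e0) = ∑ x, monomial (dmap n m x) (cmap n m A b e0 a x) := by
  have ha1 : ∀ i : Fin m, a (idx1 n m i) = 0 := fun i => hsupp _ (idx1_lt n m i)
  have ha2 : ∀ j : Fin n, a (idx2 n m j) = lastn n m a j := fun j => rfl
  rw [QS_eq, shift]
  simp only [map_add, map_sum, map_mul, aeval_C, aeval_X, algebraMap_eq, ha1, ha2, map_zero,
    add_zero]
  rw [Fintype.sum_sum_type, Fintype.sum_sum_type]
  simp only [dmap, cmap, Sum.elim_inl, Sum.elim_inr]
  have step1 : ∀ p : Fin m × Fin n,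
      C (A p.1 p.2) * X (idx1 n m p.1) * (X (idx2 n m p.2) + C (lastn n m a p.2))
        = monomial (Finsupp.single (idx1 n m p.1) 1 + Finsupp.single (idx2 n m p.2) 1)
            (A p.1 p.2)
          + monomial (Finsupp.single (idx1 n m p.1) 1) (A p.1 p.2 * lastn n m a p.2) := by
    intro p
    rw [mul_add, CXX_eq_monomial, show C (A p.1 p.2) * X (idx1 n m p.1) * C (lastn n m a p.2)
      = C (A p.1 p.2 * lastn n m a p.2) * X (idx1 n m p.1) by rw [map_mul]; ring,
      CX_eq_monomial]
  rw [Finset.sum_congr rfl (fun p _ => step1 p), Finset.sum_add_distrib]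
  have step2 : (∑ p : Fin m × Fin n,
      monomial (Finsupp.single (idx1 n m p.1) 1) (A p.1 p.2 * lastn n m a p.2))
      = ∑ i : Fin m, monomial (Finsupp.single (idx1 n m i) 1) (∑ j, A i j * lastn n m a j) := by
    rw [show (∑ p : Fin m × Fin n,
        monomial (Finsupp.single (idx1 n m p.1) 1) (A p.1 p.2 * lastn n m a p.2))
        = ∑ i : Fin m, ∑ j : Fin n,
            monomial (Finsupp.single (idx1 n m i) 1) (A i j * lastn n m a j) from
      Fintype.sum_prod_type (f := fun p =>
        monomial (Finsupp.single (idx1 n m p.1) 1) (A p.1 p.2 * lastn n m a p.2))]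
    exact Finset.sum_congr rfl fun i _ => (map_sum (monomial _) _ _).symm
  rw [step2]
  rw [Finset.sum_congr rfl (fun i (_ : i ∈ Finset.univ) => CX_eq_monomial (b i) (idx1 n m i))]
  rw [show (∑ _u : Unit, monomial (0 : Fin (max (2*n) (2*m)) →₀ ℕ) e0) = C e0 from by
    rw [Fintype.sum_unique, C_apply]]
  have hcomb : (∑ i : Fin m,
        (monomial (Finsupp.single (idx1 n m i) 1)) (∑ j, A i j * lastn n m a j))
      + ∑ i : Fin m, (monomial (Finsupp.single (idx1 n m i) 1)) (b i)
      = ∑ i : Fin m,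
          (monomial (Finsupp.single (idx1 n m i) 1)) ((∑ j, A i j * lastn n m a j) + b i) := by
    rw [← Finset.sum_add_distrib]
    exact Finset.sum_congr rfl fun i _ => (map_add _ _ _).symm
  rw [add_assoc, add_assoc]
  congr 1
  rw [← add_assoc, hcomb]

lemma dmap_inr_inr_eq_zero (n m : ℕ) (u : Unit) : dmap n m (Sum.inr (Sum.inr u)) = 0 := rfl

lemma card_support_le_nonConst_add_one {σ R : Type*} [CommRing R] (f : MvPolynomial σ R) :
    f.support.card ≤ nonConst f + 1 := by
  unfold nonConst
  have hsplit := Finset.card_filter_add_card_filter_not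
    (s := f.support) (p := fun mo : σ →₀ ℕ => mo ≠ 0)
  have hle : (f.support.filter fun mo : σ →₀ ℕ => ¬mo ≠ 0).card ≤ 1 := by
    have hsub : (f.support.filter fun mo : σ →₀ ℕ => ¬mo ≠ 0) ⊆ {0} := by
      intro x hx
      simp only [Finset.mem_filter, not_not] at hx
      simp [hx.2]
    calc (f.support.filter fun mo : σ →₀ ℕ => ¬mo ≠ 0).card
        ≤ ({0} : Finset _).card := Finset.card_le_card hsub
      _ = 1 := Finset.card_singleton _
  omega

lemma nonConst_sum_monomial {σ ι R : Type*} [Fintype ι] [CommRing R]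
    (d : ι → (σ →₀ ℕ)) (c : ι → R) (hd : Function.Injective d) :
    nonConst (∑ x : ι, monomial (d x) (c x))
      = (Finset.univ.filter fun x => c x ≠ 0 ∧ d x ≠ 0).card := by
  unfold nonConst
  rw [support_sum_monomial_inj d c hd, Finset.filter_image,
    Finset.card_image_of_injective _ hd, Finset.filter_filter]

lemma card_filter_prod_eq {α β : Type*} [Fintype α] [Fintype β] (p : α × β → Prop)
    [DecidablePred p] :
    (Finset.univ.filter p).card = ∑ a : α, (Finset.univ.filter fun b : β => p (a, b)).card := by
  rw [Finset.card_filter, Fintype.sum_prod_type]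
  exact Finset.sum_congr rfl fun a _ => (Finset.card_filter _ _).symm

lemma card_filter_not_eq {α : Type*} [Fintype α] (p : α → Prop) [DecidablePred p]
    [DecidablePred fun a => ¬p a] :
    (Finset.univ.filter fun a => ¬p a).card = Fintype.card α - (Finset.univ.filter p).card := by
  have h := Finset.card_filter_add_card_filter_not
    (s := (Finset.univ : Finset α)) (p := p)
  rw [Finset.card_univ] at h
  omega

lemma dmap_inl_ne_zero (n m : ℕ) (p : Fin m × Fin n) : dmap n m (Sum.inl p) ≠ 0 :=
  (dmap_ne_zero_iff n m _).mpr (fun u => by simp)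

lemma dmap_inr_inl_ne_zero (n m : ℕ) (i : Fin m) : dmap n m (Sum.inr (Sum.inl i)) ≠ 0 :=
  (dmap_ne_zero_iff n m _).mpr (fun u => by simp)

/-- **Lemma 5.2(2)** (for shifts supported on the last `n` coordinates): let
`0 ≤ ε ≤ 1` be real and let `a ∈ R^w` satisfy `a_j = 0` for all `j ≤ w − n`. Then `a′`
satisfies at least `(1−ε)·m` of the `m` linear equations if and only if `Q_S(Y+a)` has
at most `(3+ε)·m` non-constant monomials; in that case `Q_S(Y+a)` has at most
`(3+ε)·m + 1` monomials in total. -/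
theorem satCount_ge_iff_nonConst_le {R : Type*} [CommRing R] (n m : ℕ) (hn : 1 ≤ n)
    (hm : 1 ≤ m) (A : Matrix (Fin m) (Fin n) R)
    (hA : ∀ i, (Finset.univ.filter fun j => A i j ≠ 0).card = 3)
    (b : Fin m → R) (e0 : R)
    (ε : ℝ) (hε0 : 0 ≤ ε) (hε1 : ε ≤ 1)
    (a : Fin (max (2 * n) (2 * m)) → R)
    (hsupp : ∀ j : Fin (max (2 * n) (2 * m)), j.val < max (2 * n) (2 * m) - n → a j = 0) :
    (((1 - ε) * m ≤ ((Finset.univ.filter fun i : Fin m =>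
          (∑ j, A i j * lastn n m a j) + b i = 0).card : ℝ))
      ↔ ((nonConst (shift a (QS n m A b e0)) : ℝ) ≤ (3 + ε) * m))
    ∧ ((1 - ε) * m ≤ ((Finset.univ.filter fun i : Fin m =>
          (∑ j, A i j * lastn n m a j) + b i = 0).card : ℝ) →
        ((shift a (QS n m A b e0)).support.card : ℝ) ≤ (3 + ε) * m + 1) := by
  set S := (Finset.univ.filter fun i : Fin m =>
      (∑ j, A i j * lastn n m a j) + b i = 0).card with hSdef
  have hS : S ≤ m := le_trans (Finset.card_filter_le _ _) (by simp)
  have hnc : nonConst (shift a (QS n m A b e0)) = 3 * m + (m - S) := by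
    rw [shift_QS n m A b e0 a hsupp, nonConst_sum_monomial _ _ (dmap_inj n m),
      Finset.card_filter, Fintype.sum_sum_type, Fintype.sum_sum_type]
    simp only [cmap, Sum.elim_inl, Sum.elim_inr, dmap_inl_ne_zero, dmap_inr_inl_ne_zero,
      dmap_inr_inr_eq_zero, ne_eq, not_false_eq_true, and_true, not_true, and_false,
      if_false, Finset.sum_const, smul_eq_mul, mul_zero, add_zero]
    rw [← Finset.card_filter, ← Finset.card_filter,
      card_filter_prod_eq (fun x : Fin m × Fin n => ¬A x.1 x.2 = 0),
      card_filter_not_eq (fun i : Fin m => ∑ j : Fin n, A i j * lastn n m a j + b i = 0)]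
    have h3 : ∀ i : Fin m, (Finset.univ.filter fun j : Fin n => ¬A (i, j).1 (i, j).2 = 0).card
        = 3 := fun i => by simpa using hA i
    simp only [h3, Finset.sum_const, Finset.card_univ, Fintype.card_fin, smul_eq_mul]
    rw [← hSdef]
    ring_nf
  have hcard : (shift a (QS n m A b e0)).support.card
      ≤ nonConst (shift a (QS n m A b e0)) + 1 :=
    card_support_le_nonConst_add_one _
  have hcast : ((3 * m + (m - S) : ℕ) : ℝ) = 4 * m - S := by
    push_cast [Nat.cast_sub hS]
    ring
  have hiff : ((1 - ε) * m ≤ (S : ℝ))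
      ↔ ((nonConst (shift a (QS n m A b e0)) : ℝ) ≤ (3 + ε) * m) := by
    rw [hnc, hcast]
    constructor <;> intro h <;> linarith
  refine ⟨hiff, fun h => ?_⟩
  have h2 := hiff.mp h
  have h3 : ((shift a (QS n m A b e0)).support.card : ℝ)
      ≤ (nonConst (shift a (QS n m A b e0)) : ℝ) + 1 := by
    exact_mod_cast hcard
  linarith

end
end
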